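/- For vectors x, y in R^n, x is strictly weakly majorized by y from above (i.e., for every k = 1,...,n, the sum of the k smallest entries of x is strictly greater than the sum of the k smallest entries of y) if and only if there exists a vector z in R^n with x_i > z_i for all i and z majorized by y. -/

import Mathlib

/-- Sum of the `k` smallest entries of `x`: the minimum of `∑ i ∈ s, x i`
over subsets `s` of cardinality `k`. -/
noncomputable def smallSum {n : ℕ} (x : Fin n → ℝ) (k : ℕ) : ℝ :=
  sInf ((fun s : Finset (Fin n) => ∑ i ∈ s, x i) '' {s | s.card = k})

/-- Sum of the `k` largest entries of `x`. -/
noncomputable def largeSum {n : ℕ} (x : Fin n → ℝ) (k : ℕ) : ℝ :=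
  sSup ((fun s : Finset (Fin n) => ∑ i ∈ s, x i) '' {s | s.card = k})

/-- `x` is majorized by `y` (`x ≼ y`). -/
def Majorized {n : ℕ} (x y : Fin n → ℝ) : Prop :=
  (∀ k, k ≤ n → largeSum x k ≤ largeSum y k) ∧ ∑ i, x i = ∑ i, y i

/-- `x ≼^w y`: weak majorization from above. -/
def WeakMajAbove {n : ℕ} (x y : Fin n → ℝ) : Prop :=
  ∀ k, 1 ≤ k → k ≤ n → smallSum y k ≤ smallSum x k

/-- `x ≺^w y`: strict weak majorization from above. -/
def StrictWeakMajAbove {n : ℕ} (x y : Fin n → ℝ) : Prop :=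
  ∀ k, 1 ≤ k → k ≤ n → smallSum y k < smallSum x k

/-!
Shrinking `x` by a small `ε > 0` weakens the strict inequalities only to
`smallSum y k ≤ smallSum (x - ε) k`, so it suffices to find `z ≤ x` majorized by `y` when `x`
weakly majorizes `y` from above. Take `z = min x M`, with the level `M` chosen (by the
intermediate value theorem) so that `z` and `y` have the same total, and let `b` entries of `x`
exceed `M`. For `k ≤ b` the `k` largest entries of `z` sum to at most `k * M`, and
`k * M ≤ largeSum y k` because `b * M ≤ largeSum y b` and the average of the `k` largest entries
of `y` decreases in `k`. For `k > b` pass to complements: clipping does not lower the sum of the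
`n - k < n - b` smallest entries.
-/

open Finset Filter Topology

section SmallLargeSum

variable {n : ℕ} (v : Fin n → ℝ) {k : ℕ}

lemma finite_sums_card_eq (k : ℕ) :
    ((fun s : Finset (Fin n) => ∑ i ∈ s, v i) '' {s | #s = k}).Finite :=
  Set.toFinite _

lemma nonempty_sums_card_eq (hk : k ≤ n) :
    ((fun s : Finset (Fin n) => ∑ i ∈ s, v i) '' {s | #s = k}).Nonempty := by
  obtain ⟨t, -, ht⟩ := exists_subset_card_eq (s := (univ : Finset (Fin n))) (n := k)
    (by simpa using hk)
  exact ⟨_, t, ht, rfl⟩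

lemma smallSum_le_sum {s : Finset (Fin n)} (hs : #s = k) : smallSum v k ≤ ∑ i ∈ s, v i :=
  csInf_le (finite_sums_card_eq v k).bddBelow ⟨s, hs, rfl⟩

lemma sum_le_largeSum {s : Finset (Fin n)} (hs : #s = k) : ∑ i ∈ s, v i ≤ largeSum v k :=
  le_csSup (finite_sums_card_eq v k).bddAbove ⟨s, hs, rfl⟩

lemma le_smallSum {c : ℝ} (hk : k ≤ n) (h : ∀ s : Finset (Fin n), #s = k → c ≤ ∑ i ∈ s, v i) :
    c ≤ smallSum v k := by
  refine le_csInf (nonempty_sums_card_eq v hk) ?_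
  rintro _ ⟨s, hs, rfl⟩
  exact h s hs

lemma largeSum_le {c : ℝ} (hk : k ≤ n) (h : ∀ s : Finset (Fin n), #s = k → ∑ i ∈ s, v i ≤ c) :
    largeSum v k ≤ c := by
  refine csSup_le (nonempty_sums_card_eq v hk) ?_
  rintro _ ⟨s, hs, rfl⟩
  exact h s hs

lemma exists_sum_eq_smallSum (hk : k ≤ n) :
    ∃ s : Finset (Fin n), #s = k ∧ ∑ i ∈ s, v i = smallSum v k :=
  (nonempty_sums_card_eq v hk).csInf_mem (finite_sums_card_eq v k)

lemma exists_sum_eq_largeSum (hk : k ≤ n) :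
    ∃ s : Finset (Fin n), #s = k ∧ ∑ i ∈ s, v i = largeSum v k :=
  (nonempty_sums_card_eq v hk).csSup_mem (finite_sums_card_eq v k)

@[simp]
lemma smallSum_zero : smallSum v 0 = 0 := by
  simp [smallSum]

@[simp]
lemma largeSum_zero : largeSum v 0 = 0 := by
  simp [largeSum]

lemma largeSum_add_smallSum (hk : k ≤ n) : largeSum v k + smallSum v (n - k) = ∑ i, v i := by
  apply le_antisymm
  · obtain ⟨s, hs, hssum⟩ := exists_sum_eq_largeSum v hk
    have hsc : #sᶜ = n - k := by rw [card_compl, hs, Fintype.card_fin]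
    have := smallSum_le_sum v hsc
    rw [← hssum, ← sum_add_sum_compl s v]
    linarith
  · obtain ⟨t, ht, htsum⟩ := exists_sum_eq_smallSum v (n.sub_le k)
    have htc : #tᶜ = k := by rw [card_compl, ht, Fintype.card_fin]; omega
    have := sum_le_largeSum v htc
    rw [← htsum, ← sum_add_sum_compl t v]
    linarith

lemma smallSum_add_largeSum (hk : k ≤ n) : smallSum v k + largeSum v (n - k) = ∑ i, v i := by
  simpa [Nat.sub_sub_self hk, add_comm] using largeSum_add_smallSum v (n.sub_le k)

lemma smallSum_self : smallSum v n = ∑ i, v i := by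
  simpa using smallSum_add_largeSum v le_rfl

lemma smallSum_sub_const (c : ℝ) (hk : k ≤ n) :
    smallSum (fun i => v i - c) k = smallSum v k - k * c := by
  have sum_sub {s : Finset (Fin n)} (hs : #s = k) :
      ∑ i ∈ s, (v i - c) = ∑ i ∈ s, v i - k * c := by
    rw [sum_sub_distrib, sum_const, hs, nsmul_eq_mul]
  apply le_antisymm
  · obtain ⟨s, hs, hssum⟩ := exists_sum_eq_smallSum v hk
    rw [← hssum, ← sum_sub hs]
    exact smallSum_le_sum _ hs
  · refine le_smallSum _ hk fun s hs => ?_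
    rw [sum_sub hs]
    exact sub_le_sub_right (smallSum_le_sum v hs) _

lemma largeSum_le_mul {c : ℝ} (hk : k ≤ n) (h : ∀ i, v i ≤ c) : largeSum v k ≤ k * c := by
  refine largeSum_le v hk fun s hs => ?_
  simpa [hs] using sum_le_card_nsmul s v c fun i _ => h i

lemma smallSum_lt_smallSum {x z : Fin n → ℝ} (h : ∀ i, z i < x i) (hk₁ : 1 ≤ k) (hkn : k ≤ n) :
    smallSum z k < smallSum x k := by
  obtain ⟨s, hs, hssum⟩ := exists_sum_eq_smallSum x hkn
  have hne : s.Nonempty := card_pos.mp (by omega)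
  calc smallSum z k ≤ ∑ i ∈ s, z i := smallSum_le_sum z hs
    _ < ∑ i ∈ s, x i := sum_lt_sum_of_nonempty hne fun i _ => h i
    _ = smallSum x k := hssum

end SmallLargeSum

theorem Finset.exists_subset_card_eq_mul_sum_le {ι : Type*} (f : ι → ℝ) (s : Finset ι) {j : ℕ}
    (hj : j ≤ #s) : ∃ u ⊆ s, #u = j ∧ (j : ℝ) * ∑ i ∈ s, f i ≤ #s * ∑ i ∈ u, f i := by
  classical
  induction hb : #s generalizing s with
  | zero => exact ⟨∅, empty_subset s, by rw [card_empty]; omega, by simp [card_eq_zero.mp hb]⟩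
  | succ b ih =>
    rcases hj.eq_or_lt with rfl | hjs
    · exact ⟨s, subset_rfl, rfl, by rw [hb]⟩
    -- Removing a minimal element does not lower the average.
    obtain ⟨i, hi, hmin⟩ := s.exists_min_image f (card_pos.mp (by omega))
    have hcard : #(s.erase i) = b := by rw [card_erase_of_mem hi, hb]; rfl
    obtain ⟨u, hus, hu, hsum⟩ := ih (s.erase i) (by omega) hcard
    have hfi : (j : ℝ) * f i ≤ ∑ x ∈ u, f x := by
      simpa [hu] using card_nsmul_le_sum u f (f i) fun x hx => hmin x (erase_subset i s (hus hx))
    refine ⟨u, hus.trans (erase_subset i s), hu, ?_⟩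
    rw [← add_sum_erase s f hi]
    push_cast
    linarith

lemma mul_largeSum_le_mul_largeSum {n j b : ℕ} (y : Fin n → ℝ) (hjb : j ≤ b) (hbn : b ≤ n) :
    (j : ℝ) * largeSum y b ≤ b * largeSum y j := by
  obtain ⟨s, hs, hssum⟩ := exists_sum_eq_largeSum y hbn
  obtain ⟨u, -, hu, hsum⟩ := s.exists_subset_card_eq_mul_sum_le y (hs ▸ hjb)
  rw [← hssum]
  rw [hs] at hsum
  exact hsum.trans (mul_le_mul_of_nonneg_left (sum_le_largeSum y hu) (Nat.cast_nonneg b))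

lemma smallSum_le_smallSum_min {n m : ℕ} (x : Fin n → ℝ) (M : ℝ) (hm : m ≤ #{i | x i ≤ M}) :
    smallSum x m ≤ smallSum (fun i => min (x i) M) m := by
  set A : Finset (Fin n) := {i | x i ≤ M}
  refine le_smallSum _ (hm.trans (card_finset_fin_le A)) fun t ht => ?_
  have htA : #(t ∩ A) ≤ m := ht ▸ card_le_card inter_subset_left
  obtain ⟨s, hts, hsA, hs⟩ := exists_subsuperset_card_eq inter_subset_right htA hm
  have hcard : #(s \ (t ∩ A)) = #(t \ (t ∩ A)) := by
    rw [card_sdiff_of_subset hts, card_sdiff_of_subset inter_subset_left, hs, ht]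
  have hsx : ∑ i ∈ s, x i = ∑ i ∈ s, min (x i) M :=
    sum_congr rfl fun i hi => (min_eq_left (mem_filter.mp (hsA hi)).2).symm
  have hs_le : ∑ i ∈ s \ (t ∩ A), min (x i) M ≤ #(s \ (t ∩ A)) • M :=
    sum_le_card_nsmul _ _ _ fun i _ => min_le_right _ _
  have ht_eq : ∑ i ∈ t \ (t ∩ A), min (x i) M = #(t \ (t ∩ A)) • M := by
    rw [← sum_const]
    refine sum_congr rfl fun i hi => min_eq_right ?_
    have : i ∉ A := fun hiA => (mem_sdiff.mp hi).2 (mem_inter.mpr ⟨(mem_sdiff.mp hi).1, hiA⟩)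
    simp only [A, mem_filter, mem_univ, true_and, not_le] at this
    exact this.le
  calc smallSum x m ≤ ∑ i ∈ s, x i := smallSum_le_sum x hs
    _ = ∑ i ∈ s \ (t ∩ A), min (x i) M + ∑ i ∈ t ∩ A, min (x i) M := by
      rw [hsx, sum_sdiff hts]
    _ ≤ ∑ i ∈ t \ (t ∩ A), min (x i) M + ∑ i ∈ t ∩ A, min (x i) M := by
      rw [ht_eq, ← hcard]
      linarith
    _ = ∑ i ∈ t, min (x i) M := sum_sdiff inter_subset_left

lemma exists_sum_min_eq {ι : Type*} [Fintype ι] [Nonempty ι] (x : ι → ℝ) {c : ℝ}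
    (hc : c ≤ ∑ i, x i) : ∃ M, ∑ i, min (x i) M = c := by
  obtain ⟨M₁, hM₁⟩ := (Set.finite_range x).bddAbove
  have hcont : Continuous fun M => ∑ i, min (x i) M := by fun_prop
  have hlow : ∑ i, min (x i) (c / Fintype.card ι) ≤ c := by
    calc ∑ i, min (x i) (c / Fintype.card ι) ≤ ∑ _i : ι, c / Fintype.card ι :=
          sum_le_sum fun i _ => min_le_right _ _
      _ = c := by
        rw [sum_const, card_univ, nsmul_eq_mul]
        field_simp
  have hhigh : c ≤ ∑ i, min (x i) M₁ := by
    simpa [fun i => min_eq_left (hM₁ (Set.mem_range_self i))] using hc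
  exact intermediate_value_univ _ _ hcont ⟨hlow, hhigh⟩

lemma sum_min_eq {ι : Type*} [Fintype ι] (x : ι → ℝ) (M : ℝ) :
    ∑ i, min (x i) M = ∑ i with x i ≤ M, x i + #{i | M < x i} * M := by
  rw [← sum_filter_add_sum_filter_not univ (fun i => x i ≤ M)]
  congr 1
  · exact sum_congr rfl fun i hi => min_eq_left (mem_filter.mp hi).2
  · simp only [not_le]
    rw [← nsmul_eq_mul, ← sum_const]
    exact sum_congr rfl fun i hi => min_eq_right (mem_filter.mp hi).2.le

lemma mul_le_largeSum_of_mul_le_largeSum {n k b : ℕ} {y : Fin n → ℝ} {M : ℝ} (hkb : k ≤ b)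
    (hbn : b ≤ n) (h : b * M ≤ largeSum y b) : k * M ≤ largeSum y k := by
  rcases Nat.eq_zero_or_pos b with rfl | hb
  · obtain rfl : k = 0 := by omega
    simp
  have : (b : ℝ) * (k * M) ≤ b * largeSum y k :=
    calc (b : ℝ) * (k * M) = k * (b * M) := by ring
      _ ≤ k * largeSum y b := by gcongr
      _ ≤ b * largeSum y k := mul_largeSum_le_mul_largeSum y hkb hbn
  exact le_of_mul_le_mul_left this (by exact_mod_cast hb)

lemma WeakMajAbove.smallSum_le {n k : ℕ} {x y : Fin n → ℝ} (h : WeakMajAbove x y) (hk : k ≤ n) :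
    smallSum y k ≤ smallSum x k := by
  rcases Nat.eq_zero_or_pos k with rfl | hk₁
  · simp
  · exact h k hk₁ hk

lemma Majorized.weakMajAbove {n : ℕ} {x y : Fin n → ℝ} (h : Majorized x y) : WeakMajAbove x y := by
  intro k _ hk
  have hx := smallSum_add_largeSum x hk
  have hy := smallSum_add_largeSum y hk
  have := h.1 (n - k) (n.sub_le k)
  linarith [h.2]

lemma StrictWeakMajAbove.exists_weakMajAbove_sub {n : ℕ} {x y : Fin n → ℝ}
    (h : StrictWeakMajAbove x y) : ∃ ε > 0, WeakMajAbove (fun i => x i - ε) y := by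
  have hev : ∀ᶠ ε in 𝓝[>] (0 : ℝ), ∀ k ∈ Icc 1 n, smallSum y k < smallSum x k - k * ε := by
    refine (eventually_all_finset _).mpr fun k hk => ?_
    have hlim : Tendsto (fun ε : ℝ => smallSum x k - k * ε) (𝓝 0) (𝓝 (smallSum x k)) :=
      (by fun_prop : Continuous fun ε : ℝ => smallSum x k - k * ε).tendsto' 0 _ (by simp)
    exact (hlim.mono_left nhdsWithin_le_nhds).eventually_const_lt
      (h k (mem_Icc.mp hk).1 (mem_Icc.mp hk).2)
  obtain ⟨ε, hε, hpos⟩ := (hev.and self_mem_nhdsWithin).exists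
  refine ⟨ε, hpos, fun k hk₁ hkn => ?_⟩
  rw [smallSum_sub_const x ε hkn]
  exact (hε k (mem_Icc.mpr ⟨hk₁, hkn⟩)).le

theorem WeakMajAbove.exists_le_majorized {n : ℕ} {x y : Fin n → ℝ} (h : WeakMajAbove x y) :
    ∃ z : Fin n → ℝ, (∀ i, z i ≤ x i) ∧ Majorized z y := by
  cases isEmpty_or_nonempty (Fin n)
  · exact ⟨y, isEmptyElim, fun _ _ => le_rfl, rfl⟩
  have hsum : ∑ i, y i ≤ ∑ i, x i := by simpa [smallSum_self] using h.smallSum_le le_rfl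
  obtain ⟨M, hM⟩ := exists_sum_min_eq x hsum
  set a := #{i | x i ≤ M}
  set b := #{i | M < x i}
  have hab : a + b = n := by
    simpa [a, b, not_le] using card_filter_add_card_filter_not (s := univ) (fun i => x i ≤ M)
  have hbM : b * M ≤ largeSum y b := by
    have hya := (h.smallSum_le (k := a) (by omega)).trans (smallSum_le_sum x rfl)
    have hy := smallSum_add_largeSum y (k := a) (by omega)
    rw [show n - a = b by omega] at hy
    linarith [sum_min_eq x M]
  refine ⟨fun i => min (x i) M, fun i => min_le_left _ _, fun k hk => ?_, hM⟩
  rcases le_or_gt k b with hkb | hbk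
  · exact (largeSum_le_mul _ hk fun i => min_le_right _ _).trans
      (mul_le_largeSum_of_mul_le_largeSum hkb (by omega) hbM)
  · have hka : n - k ≤ a := by omega
    have hxz := smallSum_le_smallSum_min x M hka
    have hyx := h.smallSum_le (k := n - k) (n.sub_le k)
    have hz := largeSum_add_smallSum (fun i => min (x i) M) hk
    have hy := largeSum_add_smallSum y hk
    linarith

/-- `x` is strictly weakly majorized from above by `y` iff there exists `z` with `z i < x i` for all `i` and `z` majorized by `y`. -/
theorem strictWeakMajAbove_iff_exists_lt {n : ℕ} (x y : Fin n → ℝ) :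
    StrictWeakMajAbove x y ↔ ∃ z : Fin n → ℝ, (∀ i, z i < x i) ∧ Majorized z y := by
  constructor
  · intro h
    obtain ⟨ε, hε, hshift⟩ := h.exists_weakMajAbove_sub
    obtain ⟨z, hzx, hz⟩ := hshift.exists_le_majorized
    exact ⟨z, fun i => (hzx i).trans_lt (sub_lt_self _ hε), hz⟩
  · rintro ⟨z, hzx, hz⟩ k hk₁ hkn
    exact (hz.weakMajAbove k hk₁ hkn).trans_lt (smallSum_lt_smallSum hzx hk₁ hkn)
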